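/- Let G be a finite simple graph, let v be a vertex of G, and let u be a vertex with u ∉ N[v] (where N[v] denotes the closed neighborhood of v) such that every neighbor of u in G lies in N[v] (i.e., u is an isolated vertex of the induced subgraph G ∖ N[v]). Then the independence complex I(G) collapses onto I(G ∖ {v}), where G ∖ {v} is the induced subgraph of G on V(G) ∖ {v}. -/

import Mathlib

/-! ## Abstract simplicial complexes, collapses, simple homotopy type -/

/-- `K` is obtained from `L` by removing a free pair `(σ, τ)`:
`σ ⊊ τ`, `|τ| = |σ| + 1`, and `τ` is the unique face of `K` strictly containing `σ`. -/
def IsElemCollapse {V : Type} [DecidableEq V] (K L : Finset (Finset V)) : Prop :=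
  ∃ σ τ : Finset V, σ ∈ K ∧ τ ∈ K ∧ σ ⊂ τ ∧ τ.card = σ.card + 1 ∧
    (∀ ρ ∈ K, σ ⊂ ρ → ρ = τ) ∧ L = K \ {σ, τ}

/-- `K` collapses onto `L` by a finite sequence of elementary collapses. -/
def Collapses {V : Type} [DecidableEq V] (K L : Finset (Finset V)) : Prop :=
  Relation.ReflTransGen (fun A B => IsElemCollapse A B) K L

/-- A finite abstract simplicial complex (with its ambient vertex type). -/
structure AbsCplx : Type 1 where
  V : Type
  [deceq : DecidableEq V]
  faces : Finset (Finset V)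
  empty_mem : ∅ ∈ faces
  down_closed : ∀ σ ∈ faces, ∀ τ ⊆ σ, τ ∈ faces

attribute [instance] AbsCplx.deceq

/-- Isomorphism of abstract simplicial complexes: an injection of the vertices
(the vertices being the elements occurring in faces) carrying faces exactly to faces. -/
def AbsCplx.Iso (K L : AbsCplx) : Prop :=
  ∃ f : K.V → L.V, Set.InjOn f {v | ({v} : Finset K.V) ∈ K.faces} ∧
    L.faces = K.faces.image (Finset.image f)

/-- One step: an isomorphism or an elementary collapse. -/
def AbsCplx.Step (K L : AbsCplx) : Prop :=
  K.Iso L ∨ ∃ h : K.V = L.V, IsElemCollapse (h ▸ K.faces) L.faces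

/-- Same simple homotopy type: finite zigzag of elementary collapses,
elementary expansions, and isomorphisms. -/
def SimpleHtpyEq (K L : AbsCplx) : Prop := Relation.EqvGen AbsCplx.Step K L

/-! ## Join, suspension, spheres, wedges, point -/

/-- Join of two complexes, on the disjoint union of the vertex types. -/
def AbsCplx.join (K L : AbsCplx) : AbsCplx where
  V := K.V ⊕ L.V
  faces := (K.faces ×ˢ L.faces).image fun p => p.1.disjSum p.2
  empty_mem := by
    refine Finset.mem_image.2 ⟨(∅, ∅), Finset.mem_product.2 ⟨K.empty_mem, L.empty_mem⟩, ?_⟩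
    ext x
    cases x <;> simp [Finset.inl_mem_disjSum, Finset.inr_mem_disjSum]
  down_closed := by
    intro σ hσ τ hτ
    rcases Finset.mem_image.1 hσ with ⟨p, hp, rfl⟩
    rcases Finset.mem_product.1 hp with ⟨hp1, hp2⟩
    refine Finset.mem_image.2
      ⟨(p.1.filter (fun v => Sum.inl v ∈ τ), p.2.filter (fun w => Sum.inr w ∈ τ)), ?_, ?_⟩
    · exact Finset.mem_product.2
        ⟨K.down_closed _ hp1 _ (Finset.filter_subset _ _),
         L.down_closed _ hp2 _ (Finset.filter_subset _ _)⟩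
    · ext x
      cases x with
      | inl v =>
        simp only [Finset.inl_mem_disjSum, Finset.mem_filter]
        exact ⟨fun h => h.2, fun h => ⟨Finset.inl_mem_disjSum.1 (hτ h), h⟩⟩
      | inr w =>
        simp only [Finset.inr_mem_disjSum, Finset.mem_filter]
        exact ⟨fun h => h.2, fun h => ⟨Finset.inr_mem_disjSum.1 (hτ h), h⟩⟩

/-- `∂Δ¹`: two vertices, no edge. -/
def sphere0 : AbsCplx where
  V := Bool
  faces := {∅, {false}, {true}}
  empty_mem := by decide
  down_closed := by decide

/-- The one point complex. -/
def ptCplx : AbsCplx where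
  V := Unit
  faces := {∅, {()}}
  empty_mem := by decide
  down_closed := by decide

/-- Suspension `ΣK = K * ∂Δ¹`. -/
def AbsCplx.susp (K : AbsCplx) : AbsCplx := K.join sphere0

/-- Iterated suspension `Σ^m K`. -/
def AbsCplx.nsusp (K : AbsCplx) (m : ℕ) : AbsCplx := AbsCplx.susp^[m] K

/-- `◊ⁿ`, the join of `n+1` copies of `∂Δ¹` (a triangulated `n`-sphere). -/
def diamond : ℕ → AbsCplx
  | 0 => sphere0
  | n + 1 => (diamond n).join sphere0

/-- A chosen base vertex of `◊ⁿ`. -/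
def diamondPt : (n : ℕ) → (diamond n).V
  | 0 => true
  | _ + 1 => Sum.inr true

/-- Wedge of `m` copies of `K`, identifying the chosen vertex `v₀` of each copy
to a single common vertex. -/
def wedge (m : ℕ) (K : AbsCplx) (v₀ : K.V) : AbsCplx where
  V := Option (Fin m × K.V)
  faces := insert ∅ ((Finset.univ (α := Fin m) ×ˢ K.faces).image fun p =>
    p.2.image fun v => if v = v₀ then none else some (p.1, v))
  empty_mem := Finset.mem_insert_self _ _
  down_closed := by
    intro σ hσ τ hτ
    rcases Finset.mem_insert.1 hσ with h | h
    · subst h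
      rw [Finset.subset_empty.1 hτ]
      exact Finset.mem_insert_self _ _
    · rcases Finset.mem_image.1 h with ⟨p, hp, rfl⟩
      rcases Finset.mem_product.1 hp with ⟨-, hp2⟩
      rcases Finset.subset_image_iff.1 hτ with ⟨τ₀, hτ₀, rfl⟩
      exact Finset.mem_insert.2 (Or.inr (Finset.mem_image.2
        ⟨(p.1, τ₀), Finset.mem_product.2 ⟨Finset.mem_univ _, K.down_closed _ hp2 _ hτ₀⟩, rfl⟩))

/-! ## Graphs and independence complexes -/

/-- The closed neighborhood `N[v]`. -/
def closedNbhd {V : Type} (G : SimpleGraph V) (v : V) : Set V := insert v {w | G.Adj v w}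

/-- The graph `G - e` obtained by removing the edge `vw`. -/
def deleteEdge {V : Type} [DecidableEq V] (G : SimpleGraph V) (v w : V) : SimpleGraph V where
  Adj a b := G.Adj a b ∧ s(a, b) ≠ s(v, w)
  symm := by
    refine ⟨fun a b h => ?_⟩
    exact ⟨G.symm.symm _ _ h.1, by rw [Sym2.eq_swap]; exact h.2⟩
  loopless := ⟨fun a h => G.loopless.irrefl a h.1⟩

instance {V : Type} [DecidableEq V] (G : SimpleGraph V) [DecidableRel G.Adj] (v w : V) :
    DecidableRel (deleteEdge G v w).Adj := fun a b =>
  inferInstanceAs (Decidable (G.Adj a b ∧ s(a, b) ≠ s(v, w)))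

/-- Independent finsets of `G` contained in the vertex set `s`
(the faces of the independence complex of the induced subgraph of `G` on `s`). -/
def indepFacesOn {V : Type} [Fintype V] [DecidableEq V] (G : SimpleGraph V)
    [DecidableRel G.Adj] (s : Finset V) : Finset (Finset V) :=
  s.powerset.filter fun t => ∀ a ∈ t, ∀ b ∈ t, ¬ G.Adj a b

/-- The faces of the independence complex `I(G)`. -/
def indepFaces {V : Type} [Fintype V] [DecidableEq V] (G : SimpleGraph V)
    [DecidableRel G.Adj] : Finset (Finset V) :=
  indepFacesOn G Finset.univ

/-- The independence complex `I(G)` as an abstract simplicial complex. -/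
def indepCplx {V : Type} [Fintype V] [DecidableEq V] (G : SimpleGraph V)
    [DecidableRel G.Adj] : AbsCplx where
  V := V
  faces := indepFaces G
  empty_mem := by simp [indepFaces, indepFacesOn]
  down_closed := by
    intro σ hσ τ hτ
    simp only [indepFaces, indepFacesOn, Finset.mem_filter, Finset.mem_powerset] at hσ ⊢
    exact ⟨hτ.trans hσ.1, fun a ha b hb => hσ.2 a (hτ ha) b (hτ hb)⟩

/-- Reduced Euler characteristic of a finite complex given by its set of faces. -/
def redEuler {V : Type} [DecidableEq V] (K : Finset (Finset V)) : ℤ :=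
  ∑ σ ∈ K.filter (fun σ => σ ≠ ∅), (-1 : ℤ) ^ (σ.card - 1)

/-! ## Grid graphs (0-indexed models of the 1-indexed graphs of the paper) -/

/-- The planar grid graph `P_{m,n}`. -/
def gridP (m n : ℕ) : SimpleGraph (Fin m × Fin n) :=
  SimpleGraph.fromRel fun u v =>
    |(u.1 : ℤ) - (v.1 : ℤ)| + |(u.2 : ℤ) - (v.2 : ℤ)| = 1

instance (m n : ℕ) : DecidableRel (gridP m n).Adj := fun a b =>
  decidable_of_iff _ (SimpleGraph.fromRel_adj _ a b).symm

/-- The cylindrical grid graph `C_{m,n}`: columns indexed cyclically. -/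
def gridC (m n : ℕ) : SimpleGraph (Fin m × Fin n) :=
  SimpleGraph.fromRel fun u v =>
    (u.1 = v.1 ∧ (v.2 : ℕ) = ((u.2 : ℕ) + 1) % n) ∨
    ((u.1 : ℕ) + 1 = (v.1 : ℕ) ∧ u.2 = v.2)

instance (m n : ℕ) : DecidableRel (gridC m n).Adj := fun a b =>
  decidable_of_iff _ (SimpleGraph.fromRel_adj _ a b).symm

/-- The Möbius grid graph `M_{m,n}`. -/
def gridM (m n : ℕ) : SimpleGraph (Fin m × Fin n) :=
  SimpleGraph.fromRel fun u v =>
    ((u.1 : ℕ) + 1 = (v.1 : ℕ) ∧ u.2 = v.2) ∨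
    (u.1 = v.1 ∧ (u.2 : ℕ) + 1 = (v.2 : ℕ)) ∨
    ((u.2 : ℕ) = n - 1 ∧ (v.2 : ℕ) = 0 ∧ (u.1 : ℕ) + (v.1 : ℕ) = m - 1)

instance (m n : ℕ) : DecidableRel (gridM m n).Adj := fun a b =>
  decidable_of_iff _ (SimpleGraph.fromRel_adj _ a b).symm

/-- The cylindrical hexagonal grid graph `C^H_{1,n}`: obtained from `C_{2,2n}`
by deleting the vertical edges in the even columns. -/
def gridCH (n : ℕ) : SimpleGraph (Fin 2 × Fin (2 * n)) :=
  SimpleGraph.fromRel fun u v =>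
    (u.1 = v.1 ∧ (v.2 : ℕ) = ((u.2 : ℕ) + 1) % (2 * n)) ∨
    ((u.1 : ℕ) + 1 = (v.1 : ℕ) ∧ u.2 = v.2 ∧ ¬ Even (u.2 : ℕ))

instance (n : ℕ) : DecidableRel (gridCH n).Adj := fun a b =>
  decidable_of_iff _ (SimpleGraph.fromRel_adj _ a b).symm

/-- `M^H_{1,n}`: obtained from `M_{2,2n}` by deleting the vertical edges in the
odd columns (`1`-indexed), i.e. the even columns in this `0`-indexed model. -/
def gridMH (n : ℕ) : SimpleGraph (Fin 2 × Fin (2 * n)) :=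
  SimpleGraph.fromRel fun u v =>
    ((u.1 : ℕ) + 1 = (v.1 : ℕ) ∧ u.2 = v.2 ∧ ¬ Even (u.2 : ℕ)) ∨
    (u.1 = v.1 ∧ (u.2 : ℕ) + 1 = (v.2 : ℕ)) ∨
    ((u.2 : ℕ) = 2 * n - 1 ∧ (v.2 : ℕ) = 0 ∧ (u.1 : ℕ) + (v.1 : ℕ) = 1)

instance (n : ℕ) : DecidableRel (gridMH n).Adj := fun a b =>
  decidable_of_iff _ (SimpleGraph.fromRel_adj _ a b).symm

/-!
A face of `I(G)` containing `v` but not `u` stays independent when `u` is added, because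
every neighbour of `u` lies in `N[v]`. So the faces containing `v` come in pairs
`(σ, σ ∪ {u})`. Removing these pairs in order of decreasing `|σ|` is a sequence of elementary
collapses: when `σ` has maximal size among the remaining ones, `σ ∪ {u}` is its only remaining
proper coface (a coface avoiding `u` would be a larger `σ`, and no face avoiding `v` contains
`σ`). What remains are the faces avoiding `v`, which form `I(G ∖ {v})`.
-/

open Finset

section PairingCollapse

variable {V : Type} [DecidableEq V] {L M : Finset (Finset V)} {u : V} {σ : Finset V}

theorem Finset.insert_injOn_notMem (a : V) : Set.InjOn (insert a) {s : Finset V | a ∉ s} :=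
  fun s hs t ht h => by rw [← erase_insert hs, h, erase_insert ht]

theorem isElemCollapse_insert_pair (hσM : σ ∉ M) (hσmax : ∀ τ ∈ M, τ.card ≤ σ.card)
    (hu : ∀ τ ∈ insert σ M, u ∉ τ) (hL : ∀ τ ∈ insert σ M, ∀ ρ ∈ L, ¬ τ ⊆ ρ) :
    IsElemCollapse (L ∪ insert σ M ∪ (insert σ M).image (insert u))
      (L ∪ M ∪ M.image (insert u)) := by
  have huσ : u ∉ σ := hu σ (mem_insert_self σ M)
  have hσL := hL σ (mem_insert_self σ M)
  refine ⟨σ, insert u σ, by simp, by simp, ssubset_insert huσ,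
    card_insert_of_notMem huσ, ?_, ?_⟩
  · intro ρ hρ hσρ
    simp only [mem_union, mem_insert, mem_image] at hρ
    rcases hρ with (hρL | hρσ | hρM) | ⟨τ, hτ, rfl⟩
    · exact absurd hσρ.subset (hσL ρ hρL)
    · exact absurd hρσ.symm hσρ.ne
    · exact absurd (card_lt_card hσρ) (not_lt.2 (hσmax ρ hρM))
    · have hστ : σ ⊆ τ := (subset_insert_iff_of_notMem huσ).1 hσρ.subset
      rcases hτ with rfl | hτM
      · rfl
      · rw [eq_of_subset_of_card_le hστ (hσmax τ hτM)]
  · ext ρ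
    simp only [mem_union, mem_insert, mem_image, mem_sdiff, mem_singleton]
    have hins : ∀ τ ∈ M, insert u τ ≠ insert u σ := fun τ hτ h =>
      hσM (insert_injOn_notMem u (hu τ (mem_insert_of_mem hτ)) huσ h ▸ hτ)
    grind

theorem collapses_union_image_insert (hu : ∀ τ ∈ M, u ∉ τ)
    (hL : ∀ τ ∈ M, ∀ ρ ∈ L, ¬ τ ⊆ ρ) : Collapses (L ∪ M ∪ M.image (insert u)) L := by
  induction M using
    @induction_on_max_value _ _ _ (inferInstance : DecidableEq (Finset V)) card with
  | empty =>
    simp only [image_empty, union_empty]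
    exact Relation.ReflTransGen.refl
  | insert σ M hσM hσmax ih =>
    exact .head (isElemCollapse_insert_pair hσM hσmax hu hL)
      (ih (fun τ hτ => hu τ (mem_insert_of_mem hτ))
        (fun τ hτ => hL τ (mem_insert_of_mem hτ)))

end PairingCollapse

section IndependenceComplex

variable {V : Type} [Fintype V] [DecidableEq V] (G : SimpleGraph V) [DecidableRel G.Adj]
  {u v : V} {σ : Finset V}

theorem mem_indepFaces_iff : σ ∈ indepFaces G ↔ ∀ a ∈ σ, ∀ b ∈ σ, ¬ G.Adj a b := by
  simp [indepFaces, indepFacesOn]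

theorem mem_indepFacesOn_erase_iff :
    σ ∈ indepFacesOn G (univ.erase v) ↔ σ ∈ indepFaces G ∧ v ∉ σ := by
  simp [indepFacesOn, mem_indepFaces_iff, subset_erase, and_comm]

theorem insert_mem_indepFaces_iff :
    insert u σ ∈ indepFaces G ↔ σ ∈ indepFaces G ∧ ∀ b ∈ σ, ¬ G.Adj u b := by
  simp only [mem_indepFaces_iff, mem_insert]
  grind [SimpleGraph.Adj.symm, SimpleGraph.irrefl]

theorem insert_mem_indepFaces_of_mem (hu : u ∉ closedNbhd G v)
    (hnbr : ∀ w : V, G.Adj u w → w ∈ closedNbhd G v) (hσ : σ ∈ indepFaces G) (hvσ : v ∈ σ) :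
    insert u σ ∈ indepFaces G := by
  refine (insert_mem_indepFaces_iff G).2 ⟨hσ, fun b hb hub => ?_⟩
  rcases hnbr b hub with rfl | hvb
  · exact hu (Or.inr hub.symm)
  · exact (mem_indepFaces_iff G).1 hσ v hvσ b hb hvb

theorem indepFaces_eq_union_image_insert (hu : u ∉ closedNbhd G v)
    (hnbr : ∀ w : V, G.Adj u w → w ∈ closedNbhd G v) :
    let M := (indepFaces G).filter fun σ => v ∈ σ ∧ u ∉ σ
    indepFaces G = indepFacesOn G (univ.erase v) ∪ M ∪ M.image (insert u) := by
  intro M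
  ext σ
  simp only [M, mem_union, mem_filter, mem_image,
    mem_indepFacesOn_erase_iff]
  constructor
  · intro hσ
    by_cases hvσ : v ∈ σ
    · by_cases huσ : u ∈ σ
      · refine Or.inr ⟨σ.erase u, ⟨?_, ?_, σ.notMem_erase u⟩, insert_erase huσ⟩
        · exact (indepCplx G).down_closed σ hσ _ (erase_subset u σ)
        · exact mem_erase_of_ne_of_mem (fun h => hu (h ▸ Set.mem_insert v _)) hvσ
      · exact Or.inl (Or.inr ⟨hσ, hvσ, huσ⟩)
    · exact Or.inl (Or.inl ⟨hσ, hvσ⟩)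
  · rintro ((h | h) | ⟨τ, ⟨hτ, hvτ, -⟩, rfl⟩)
    · exact h.1
    · exact h.1
    · exact insert_mem_indepFaces_of_mem G hu hnbr hτ hvτ

end IndependenceComplex

/-- If `u ∉ N[v]` and every neighbor of `u` lies in `N[v]`
(so `u` is isolated in `G ∖ N[v]`), then `I(G)` collapses onto `I(G ∖ {v})`. -/
theorem indepFaces_collapses_of_isolated {V : Type} [Fintype V] [DecidableEq V]
    (G : SimpleGraph V) [DecidableRel G.Adj] (v u : V)
    (hu : u ∉ closedNbhd G v)
    (hnbr : ∀ w : V, G.Adj u w → w ∈ closedNbhd G v) :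
    Collapses (indepFaces G) (indepFacesOn G (Finset.univ.erase v)) := by
  rw [indepFaces_eq_union_image_insert G hu hnbr]
  refine collapses_union_image_insert (fun τ hτ => (mem_filter.1 hτ).2.2) ?_
  intro τ hτ ρ hρ hτρ
  exact ((mem_indepFacesOn_erase_iff G).1 hρ).2 (hτρ (mem_filter.1 hτ).2.1)
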